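/- Let Y be an m×n real matrix with SVD Y = UΣVᵀ, and let τ > 0. Then the singular value shrinkage operator Γ_τ(Y) = U·max(Σ − τI, 0)·Vᵀ is the unique minimizer of the function X ↦ τ‖X‖_* + (1/2)‖X − Y‖_F² over all m×n real matrices X. -/

import Mathlib

open Matrix

noncomputable def singularValues {m n : ℕ} (A : Matrix (Fin m) (Fin n) ℝ) : Fin n → ℝ :=
  fun i => Real.sqrt ((Matrix.isHermitian_conjTranspose_mul_self A).eigenvalues i)

noncomputable def nuclearNorm {m n : ℕ} (A : Matrix (Fin m) (Fin n) ℝ) : ℝ :=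
  ∑ i, singularValues A i

/-- The Frobenius norm of a real matrix. -/
noncomputable def frobNorm {m n : ℕ} (A : Matrix (Fin m) (Fin n) ℝ) : ℝ :=
  Real.sqrt (∑ i, ∑ j, (A i j) ^ 2)

namespace SVTAux

open Polynomial

lemma charpoly_orth_conj {k : ℕ} (P A : Matrix (Fin k) (Fin k) ℝ)
    (hP : P * Pᵀ = 1) :
    (P * A * Pᵀ).charpoly = A.charpoly := by
  have hmap : ∀ (M N : Matrix (Fin k) (Fin k) ℝ),
      (M * N).map (C : ℝ →+* ℝ[X]) = M.map C * N.map C := fun M N => Matrix.map_mul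
  have h1 : (P.map (C : ℝ →+* ℝ[X])) * (Pᵀ.map C) = 1 := by
    rw [← hmap, hP, Matrix.map_one _ (map_zero _) (map_one _)]
  have key : charmatrix (P * A * Pᵀ) = (P.map C) * charmatrix A * (Pᵀ.map C) := by
    unfold charmatrix
    rw [RingHom.mapMatrix_apply, RingHom.mapMatrix_apply, mul_sub, sub_mul, hmap, hmap]
    congr 1
    rw [scalar_apply, ← Matrix.smul_one_eq_diagonal, Matrix.mul_smul, mul_one,
      Matrix.smul_mul, h1]
  rw [Matrix.charpoly, key, det_mul, det_mul, Matrix.charpoly]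
  have h2 : (P.map (C : ℝ →+* ℝ[X])).det * (Pᵀ.map C).det = 1 := by
    rw [← det_mul, h1, det_one]
  calc (P.map (C : ℝ →+* ℝ[X])).det * (charmatrix A).det * (Pᵀ.map C).det
      = ((P.map (C : ℝ →+* ℝ[X])).det * (Pᵀ.map C).det) * (charmatrix A).det := by ring
    _ = (charmatrix A).det := by rw [h2, one_mul]

lemma charpoly_diagonal {k : ℕ} (d : Fin k → ℝ) :
    (Matrix.diagonal d).charpoly = ∏ i, (X - C (d i)) := by
  rw [Matrix.charpoly]
  have : charmatrix (Matrix.diagonal d) = Matrix.diagonal (fun i => X - C (d i)) := by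
    unfold charmatrix
    rw [RingHom.mapMatrix_apply, scalar_apply, Matrix.diagonal_map (map_zero _),
      Matrix.diagonal_sub]
  rw [this, det_diagonal]

lemma real_spectral {k : ℕ} {H : Matrix (Fin k) (Fin k) ℝ} (hH : H.IsHermitian) :
    H = (hH.eigenvectorUnitary : Matrix (Fin k) (Fin k) ℝ) * Matrix.diagonal hH.eigenvalues
        * (hH.eigenvectorUnitary : Matrix (Fin k) (Fin k) ℝ)ᵀ := by
  have := hH.spectral_theorem
  simpa [Matrix.star_eq_conjTranspose, Function.comp] using this

lemma sum_sqrt_eigs {k : ℕ} {H : Matrix (Fin k) (Fin k) ℝ} (hH : H.IsHermitian)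
    (P : Matrix (Fin k) (Fin k) ℝ) (d : Fin k → ℝ) (hP : P * Pᵀ = 1)
    (hHeq : H = P * Matrix.diagonal d * Pᵀ) :
    ∀ g : ℝ → ℝ, ∑ i, g (hH.eigenvalues i) = ∑ i, g (d i) := by
  intro g
  have h1 : H.charpoly = ∏ i, (X - C (d i)) := by
    rw [hHeq, charpoly_orth_conj _ _ hP, charpoly_diagonal]
  have h2 : H.charpoly = ∏ i, (X - C (hH.eigenvalues i)) := by
    have hQ : (hH.eigenvectorUnitary : Matrix (Fin k) (Fin k) ℝ) *
        (hH.eigenvectorUnitary : Matrix (Fin k) (Fin k) ℝ)ᵀ = 1 := by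
      have := (Matrix.mem_unitaryGroup_iff).mp hH.eigenvectorUnitary.2
      simpa [Matrix.star_eq_conjTranspose] using this
    have := congrArg Matrix.charpoly (real_spectral hH)
    rw [charpoly_orth_conj _ _ hQ, charpoly_diagonal] at this
    exact this
  have hms : Multiset.map hH.eigenvalues Finset.univ.val = Multiset.map d Finset.univ.val := by
    have r1 : ((Multiset.map hH.eigenvalues Finset.univ.val).map (fun a => X - C a)).prod.roots
        = Multiset.map hH.eigenvalues Finset.univ.val := roots_multiset_prod_X_sub_C _
    have r2 : ((Multiset.map d Finset.univ.val).map (fun a => X - C a)).prod.roots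
        = Multiset.map d Finset.univ.val := roots_multiset_prod_X_sub_C _
    have e1 : ((Multiset.map hH.eigenvalues Finset.univ.val).map (fun a => X - C a)).prod
        = ∏ i, (X - C (hH.eigenvalues i)) := by
      rw [Multiset.map_map]; rfl
    have e2 : ((Multiset.map d Finset.univ.val).map (fun a => X - C a)).prod
        = ∏ i, (X - C (d i)) := by
      rw [Multiset.map_map]; rfl
    rw [← r1, ← r2, e1, e2, ← h1, ← h2]
  calc ∑ i, g (hH.eigenvalues i) = ((Multiset.map hH.eigenvalues Finset.univ.val).map g).sum := by
        rw [Multiset.map_map]; rfl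
    _ = ((Multiset.map d Finset.univ.val).map g).sum := by rw [hms]
    _ = ∑ i, g (d i) := by rw [Multiset.map_map]; rfl

lemma sum_rectdiag {m n : ℕ} (j : Fin n) (g : Fin m → ℝ)
    (hg : ∀ i : Fin m, (i : ℕ) ≠ (j : ℕ) → g i = 0) :
    ∑ i, g i = if h : (j : ℕ) < m then g ⟨j, h⟩ else 0 := by
  split
  · next h =>
    refine Finset.sum_eq_single (M := ℝ) (⟨(j : ℕ), h⟩ : Fin m) ?_ ?_
    · intro i _ hne
      exact hg i (fun hc => hne (Fin.ext hc))
    · simp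
  · next h =>
    apply Finset.sum_eq_zero
    intro i _
    exact hg i (fun hc => h (hc ▸ i.2))

lemma rectdiag_transpose_mul_self {m n : ℕ} (A : Matrix (Fin m) (Fin n) ℝ)
    (hA : ∀ (i : Fin m) (j : Fin n), (i : ℕ) ≠ (j : ℕ) → A i j = 0) :
    Aᵀ * A = Matrix.diagonal (fun j => ∑ i, A i j * A i j) := by
  ext j k
  by_cases hjk : j = k
  · subst hjk
    simp [Matrix.mul_apply, Matrix.diagonal]
  · rw [Matrix.diagonal_apply_ne _ hjk, Matrix.mul_apply]
    apply Finset.sum_eq_zero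
    intro i _
    by_cases hij : (i : ℕ) = (j : ℕ)
    · rw [Matrix.transpose_apply, hA i k (fun hc => hjk (Fin.ext (hij ▸ hc).symm ▸ rfl)), mul_zero]
    · rw [Matrix.transpose_apply, hA i j hij, zero_mul]

lemma nuclearNorm_conj_aux {m n : ℕ} (U : Matrix (Fin m) (Fin m) ℝ)
    (A : Matrix (Fin m) (Fin n) ℝ) (V : Matrix (Fin n) (Fin n) ℝ)
    (hU : Uᵀ * U = 1) (hV' : V * Vᵀ = 1)
    (hA : ∀ (i : Fin m) (j : Fin n), (i : ℕ) ≠ (j : ℕ) → A i j = 0) :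
    ∀ g : ℝ → ℝ, ∑ i, g ((Matrix.isHermitian_conjTranspose_mul_self (U * A * Vᵀ)).eigenvalues i)
      = ∑ j, g (∑ i, A i j * A i j) := by
  intro g
  apply sum_sqrt_eigs _ V _ hV'
  have h1 : (U * A * Vᵀ)ᴴ = V * Aᵀ * Uᵀ := by
    simp [Matrix.conjTranspose_eq_transpose_of_trivial, Matrix.transpose_mul,
      Matrix.transpose_transpose, Matrix.mul_assoc]
  rw [h1]
  calc V * Aᵀ * Uᵀ * (U * A * Vᵀ) = V * (Aᵀ * (Uᵀ * U) * A) * Vᵀ := by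
        simp only [Matrix.mul_assoc]
    _ = V * (Aᵀ * A) * Vᵀ := by rw [hU, Matrix.mul_one]
    _ = V * Matrix.diagonal (fun j => ∑ i, A i j * A i j) * Vᵀ := by
        rw [rectdiag_transpose_mul_self A hA]

lemma dot_le {k : ℕ} (a b : Fin k → ℝ) :
    a ⬝ᵥ b ≤ Real.sqrt (a ⬝ᵥ a) * Real.sqrt (b ⬝ᵥ b) := by
  have h := Finset.sum_mul_sq_le_sq_mul_sq Finset.univ a b
  have h2 : a ⬝ᵥ b ≤ |a ⬝ᵥ b| := le_abs_self _
  refine h2.trans ?_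
  have ea : a ⬝ᵥ a = ∑ i, a i ^ 2 := by simp [dotProduct, pow_two]
  have eb : b ⬝ᵥ b = ∑ i, b i ^ 2 := by simp [dotProduct, pow_two]
  rw [← Real.sqrt_sq_eq_abs, ea, eb,
    ← Real.sqrt_mul (by positivity : (0:ℝ) ≤ ∑ i, a i ^ 2)]
  exact Real.sqrt_le_sqrt h

lemma dot_self_mulVec {p r : ℕ} (M : Matrix (Fin p) (Fin r) ℝ) (v : Fin r → ℝ) :
    (M *ᵥ v) ⬝ᵥ (M *ᵥ v) = v ⬝ᵥ ((Mᵀ * M) *ᵥ v) := by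
  rw [← Matrix.mulVec_mulVec, dotProduct_comm, Matrix.dotProduct_mulVec,
    ← Matrix.mulVec_transpose, dotProduct_comm]

lemma conj_diag_entry {k : ℕ} (Q M : Matrix (Fin k) (Fin k) ℝ) (j : Fin k) :
    (Qᵀ * M * Q) j j = (fun a => Q a j) ⬝ᵥ (M *ᵥ fun a => Q a j) := by
  simp only [Matrix.mul_apply, Matrix.mulVec, dotProduct, Matrix.transpose_apply,
    Finset.sum_mul, Finset.mul_sum]
  rw [Finset.sum_comm]
  apply Finset.sum_congr rfl; intro x _
  apply Finset.sum_congr rfl; intro i _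
  ring

lemma trace_conj {k : ℕ} (Q M : Matrix (Fin k) (Fin k) ℝ) (hQ : Q * Qᵀ = 1) :
    Matrix.trace (Qᵀ * M * Q) = Matrix.trace M := by
  rw [Matrix.trace_mul_cycle, hQ, Matrix.one_mul]

lemma key_ineq {m n : ℕ} (τ : ℝ) (hτ : 0 ≤ τ)
    (U : Matrix (Fin m) (Fin m) ℝ) (D : Matrix (Fin m) (Fin n) ℝ)
    (V : Matrix (Fin n) (Fin n) ℝ)
    (hU : Uᵀ * U = 1) (hV' : V * Vᵀ = 1)
    (hD : ∀ (i : Fin m) (j : Fin n), (i : ℕ) ≠ (j : ℕ) → D i j = 0)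
    (hD0 : ∀ i j, 0 ≤ D i j) (hDτ : ∀ i j, D i j ≤ τ)
    (X : Matrix (Fin m) (Fin n) ℝ) :
    Matrix.trace ((U * D * Vᵀ)ᵀ * X) ≤ τ * nuclearNorm X := by
  set W := U * D * Vᵀ with hW
  have hG : (Xᵀ * X).IsHermitian := Matrix.isHermitian_conjTranspose_mul_self X
  set Q : Matrix (Fin n) (Fin n) ℝ := (hG.eigenvectorUnitary : Matrix (Fin n) (Fin n) ℝ) with hQdef
  have hQ1 : Qᵀ * Q = 1 := by
    have := (Matrix.mem_unitaryGroup_iff').mp hG.eigenvectorUnitary.2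
    simpa [Matrix.star_eq_conjTranspose] using this
  have hQ2 : Q * Qᵀ = 1 := by
    have := (Matrix.mem_unitaryGroup_iff).mp hG.eigenvectorUnitary.2
    simpa [Matrix.star_eq_conjTranspose] using this
  have hlam0 : ∀ j, 0 ≤ hG.eigenvalues j := fun j =>
    (Matrix.posSemidef_conjTranspose_mul_self X).eigenvalues_nonneg j
  set q : Fin n → Fin n → ℝ := fun j a => Q a j with hq
  have hqq : ∀ j, q j ⬝ᵥ q j = 1 := by
    intro j
    have := congrFun (congrFun hQ1 j) j
    simpa [Matrix.mul_apply, dotProduct, Matrix.one_apply] using this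
  have heig : ∀ j, (Xᵀ * X) *ᵥ q j = hG.eigenvalues j • q j := by
    intro j
    have hGQ : (Xᵀ * X) * Q = Q * Matrix.diagonal hG.eigenvalues := by
      conv_lhs => rw [real_spectral hG]
      rw [Matrix.mul_assoc, ← hQdef, hQ1, Matrix.mul_one]
    funext a
    have h0 := congrFun (congrFun hGQ a) j
    rw [Matrix.mul_apply, Matrix.mul_apply] at h0
    have h1 : ∑ x, (Xᵀ * X) a x * Q x j = ∑ x, Q a x * Matrix.diagonal hG.eigenvalues x j := h0
    have h2 : ∑ x, Q a x * Matrix.diagonal hG.eigenvalues x j = Q a j * hG.eigenvalues j := by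
      rw [Finset.sum_eq_single j (fun x _ hx => by
        rw [Matrix.diagonal_apply_ne _ hx, mul_zero]) (by simp), Matrix.diagonal_apply_eq]
    rw [h2] at h1
    show ((Xᵀ * X) *ᵥ q j) a = (hG.eigenvalues j • q j) a
    simp only [Matrix.mulVec, dotProduct, hq, Pi.smul_apply, smul_eq_mul]
    rw [h1]; ring
  have hXq : ∀ j, (X *ᵥ q j) ⬝ᵥ (X *ᵥ q j) = hG.eigenvalues j := by
    intro j
    rw [dot_self_mulVec, heig j]
    simp [dotProduct, Pi.smul_apply, smul_eq_mul, Finset.mul_sum]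
    have := hqq j
    simp [dotProduct] at this
    calc ∑ a, q j a * (hG.eigenvalues j * q j a)
        = hG.eigenvalues j * ∑ a, q j a * q j a := by rw [Finset.mul_sum]; congr 1; funext a; ring
      _ = hG.eigenvalues j := by rw [this, mul_one]
  have hWq : ∀ j, (W *ᵥ q j) ⬝ᵥ (W *ᵥ q j) ≤ τ^2 := by
    intro j
    rw [dot_self_mulVec]
    have hWW : Wᵀ * W = V * Matrix.diagonal (fun j => ∑ i, D i j * D i j) * Vᵀ := by
      rw [hW]
      have : (U * D * Vᵀ)ᵀ = V * Dᵀ * Uᵀ := by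
        simp [Matrix.transpose_mul, Matrix.mul_assoc]
      rw [this]
      calc V * Dᵀ * Uᵀ * (U * D * Vᵀ) = V * (Dᵀ * (Uᵀ * U) * D) * Vᵀ := by
            simp only [Matrix.mul_assoc]
        _ = V * (Dᵀ * D) * Vᵀ := by rw [hU, Matrix.mul_one]
        _ = _ := by rw [rectdiag_transpose_mul_self D hD]
    rw [hWW]
    set w := Vᵀ *ᵥ q j with hwdef
    have h1 : q j ⬝ᵥ ((V * Matrix.diagonal (fun j => ∑ i, D i j * D i j) * Vᵀ) *ᵥ q j)
        = w ⬝ᵥ (Matrix.diagonal (fun j => ∑ i, D i j * D i j) *ᵥ w) := by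
      rw [← Matrix.mulVec_mulVec, ← Matrix.mulVec_mulVec, Matrix.dotProduct_mulVec,
        ← Matrix.mulVec_transpose, hwdef]
    have hww : w ⬝ᵥ w = 1 := by
      rw [hwdef, dot_self_mulVec]
      have : Vᵀᵀ * Vᵀ = 1 := by rw [Matrix.transpose_transpose, hV']
      rw [this, Matrix.one_mulVec, hqq j]
    have he : ∀ i : Fin n, (∑ a, D a i * D a i) ≤ τ^2 := by
      intro i
      rw [sum_rectdiag i _ (fun a ha => by rw [hD a i ha, mul_zero])]
      split
      · next h =>
          have : D ⟨i, h⟩ i * D ⟨i, h⟩ i ≤ τ * τ :=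
            mul_le_mul (hDτ _ _) (hDτ _ _) (hD0 _ _) hτ
          calc D ⟨(i:ℕ), h⟩ i * D ⟨(i:ℕ), h⟩ i ≤ τ * τ := this
            _ = τ^2 := (sq τ).symm
      · positivity
    rw [h1]
    calc w ⬝ᵥ (Matrix.diagonal (fun j => ∑ i, D i j * D i j) *ᵥ w)
        = ∑ i, (∑ a, D a i * D a i) * (w i * w i) := by
          simp [dotProduct, Matrix.mulVec_diagonal]
          congr 1; funext i; ring
      _ ≤ ∑ i, τ^2 * (w i * w i) := by
          apply Finset.sum_le_sum
          intro i _
          exact mul_le_mul_of_nonneg_right (he i) (mul_self_nonneg _)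
      _ = τ^2 * (w ⬝ᵥ w) := by rw [← Finset.mul_sum]; rfl
      _ = τ^2 := by rw [hww, mul_one]
  have htr : Matrix.trace (Wᵀ * X) = ∑ j, (q j) ⬝ᵥ ((Wᵀ * X) *ᵥ q j) := by
    rw [← trace_conj Q (Wᵀ * X) hQ2, Matrix.trace]
    apply Finset.sum_congr rfl
    intro j _
    exact conj_diag_entry Q (Wᵀ * X) j
  rw [htr]
  have hterm : ∀ j, (q j) ⬝ᵥ ((Wᵀ * X) *ᵥ q j) ≤ τ * singularValues X j := by
    intro j
    have e1 : (q j) ⬝ᵥ ((Wᵀ * X) *ᵥ q j) = (W *ᵥ q j) ⬝ᵥ (X *ᵥ q j) := by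
      rw [← Matrix.mulVec_mulVec, Matrix.dotProduct_mulVec, ← Matrix.mulVec_transpose,
        Matrix.transpose_transpose]
    rw [e1]
    refine (dot_le _ _).trans ?_
    have b1 : Real.sqrt ((W *ᵥ q j) ⬝ᵥ (W *ᵥ q j)) ≤ τ := by
      refine (Real.sqrt_le_sqrt (hWq j)).trans ?_
      rw [Real.sqrt_sq hτ]
    have b2 : Real.sqrt ((X *ᵥ q j) ⬝ᵥ (X *ᵥ q j)) = singularValues X j := by
      rw [hXq j]; rfl
    rw [b2]
    exact mul_le_mul_of_nonneg_right b1 (Real.sqrt_nonneg _) |>.trans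
      (le_of_eq rfl)
  calc ∑ j, (q j) ⬝ᵥ ((Wᵀ * X) *ᵥ q j) ≤ ∑ j, τ * singularValues X j :=
        Finset.sum_le_sum (fun j _ => hterm j)
    _ = τ * nuclearNorm X := by rw [nuclearNorm, Finset.mul_sum]

lemma sq_sub_expand {m n : ℕ} (P Q : Matrix (Fin m) (Fin n) ℝ) :
    ∑ i, ∑ j, ((P - Q) i j)^2
      = (∑ i, ∑ j, (P i j)^2) - 2 * (∑ i, ∑ j, P i j * Q i j) + ∑ i, ∑ j, (Q i j)^2 := by
  calc ∑ i, ∑ j, ((P - Q) i j)^2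
      = ∑ i, ∑ j, ((P i j)^2 - 2*(P i j * Q i j) + (Q i j)^2) := by
        apply Finset.sum_congr rfl; intro i _; apply Finset.sum_congr rfl; intro j _
        rw [Matrix.sub_apply]; ring
    _ = _ := by
        simp only [Finset.sum_add_distrib, Finset.sum_sub_distrib, ← Finset.mul_sum]

lemma trace_eq_ip {m n : ℕ} (W X : Matrix (Fin m) (Fin n) ℝ) :
    Matrix.trace (Wᵀ * X) = ∑ i, ∑ j, X i j * W i j := by
  rw [Matrix.trace]
  simp only [Matrix.diag, Matrix.mul_apply, Matrix.transpose_apply]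
  rw [Finset.sum_comm]
  apply Finset.sum_congr rfl; intro i _
  apply Finset.sum_congr rfl; intro j _
  ring

end SVTAux

open SVTAux in
/-- Singular value shrinkage: if `Y = U Σ Vᵀ` is an SVD (with `Σ` the
rectangular diagonal matrix of nonnegative singular values) and `τ > 0`, then
`Γ_τ(Y) = U · max(Σ − τI, 0) · Vᵀ` is the unique minimizer of
`X ↦ τ‖X‖_* + (1/2)‖X − Y‖_F²` over all `m × n` real matrices. -/
theorem singular_value_shrinkage_is_unique_minimizer {m n : ℕ} (τ : ℝ) (hτ : 0 < τ)
    (Y : Matrix (Fin m) (Fin n) ℝ) (U : Matrix (Fin m) (Fin m) ℝ)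
    (S : Matrix (Fin m) (Fin n) ℝ) (V : Matrix (Fin n) (Fin n) ℝ)
    (hU : Uᵀ * U = 1) (hU' : U * Uᵀ = 1) (hV : Vᵀ * V = 1) (hV' : V * Vᵀ = 1)
    (hSdiag : ∀ (i : Fin m) (j : Fin n), (i : ℕ) ≠ (j : ℕ) → S i j = 0) (hSnonneg : ∀ (i : Fin m) (j : Fin n), 0 ≤ S i j)
    (hY : Y = U * S * Vᵀ) :
    let Sshrunk : Matrix (Fin m) (Fin n) ℝ :=
      Matrix.of fun i j => max (S i j - if (i : ℕ) = (j : ℕ) then τ else 0) 0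
    let Xstar := U * Sshrunk * Vᵀ
    let f : Matrix (Fin m) (Fin n) ℝ → ℝ :=
      fun X => τ * nuclearNorm X + (1 / 2) * (frobNorm (X - Y)) ^ 2
    (∀ X, f Xstar ≤ f X) ∧ (∀ X, f X = f Xstar → X = Xstar) := by
  intro Sshrunk Xstar f
  -- basic facts about Sshrunk
  have hSsh_apply : ∀ (i : Fin m) (j : Fin n),
      Sshrunk i j = max (S i j - if (i : ℕ) = (j : ℕ) then τ else 0) 0 := fun i j => rfl
  have hSsh0 : ∀ (i : Fin m) (j : Fin n), 0 ≤ Sshrunk i j := fun i j => le_max_right _ _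
  have hSshdiag : ∀ (i : Fin m) (j : Fin n), (i : ℕ) ≠ (j : ℕ) → Sshrunk i j = 0 := by
    intro i j h
    rw [hSsh_apply, if_neg h, sub_zero, hSdiag i j h, max_self]
  -- D = S - Sshrunk
  set D : Matrix (Fin m) (Fin n) ℝ := S - Sshrunk with hDdef
  have hD_apply : ∀ (i : Fin m) (j : Fin n), D i j = S i j - Sshrunk i j := by
    intro i j; rw [hDdef, Matrix.sub_apply]
  have hDdiag : ∀ (i : Fin m) (j : Fin n), (i : ℕ) ≠ (j : ℕ) → D i j = 0 := by
    intro i j h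
    rw [hD_apply, hSdiag i j h, hSshdiag i j h, sub_zero]
  have hD0 : ∀ (i : Fin m) (j : Fin n), 0 ≤ D i j := by
    intro i j
    rw [hD_apply, hSsh_apply]
    have hc : (0:ℝ) ≤ (if (i : ℕ) = (j : ℕ) then τ else 0) := by
      split
      · exact hτ.le
      · exact le_refl 0
    have : max (S i j - if (i : ℕ) = (j : ℕ) then τ else 0) 0 ≤ S i j :=
      max_le (by linarith) (hSnonneg i j)
    linarith
  have hDτ : ∀ (i : Fin m) (j : Fin n), D i j ≤ τ := by
    intro i j
    rw [hD_apply, hSsh_apply]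
    by_cases h : (i : ℕ) = (j : ℕ)
    · rw [if_pos h]
      rcases le_total (S i j) τ with hle | hle
      · have : max (S i j - τ) 0 = 0 := max_eq_right (by linarith)
        rw [this]; linarith
      · have : max (S i j - τ) 0 = S i j - τ := max_eq_left (by linarith)
        rw [this]; linarith
    · rw [if_neg h, sub_zero]
      have : max (S i j) 0 = S i j := max_eq_left (hSnonneg i j)
      rw [this]
      have := hSnonneg i j
      linarith [hSdiag i j h, hτ.le]
  -- W = Y - Xstar
  have hWmat : Y - Xstar = U * D * Vᵀ := by
    rw [hY, hDdef]
    show U * S * Vᵀ - U * Sshrunk * Vᵀ = U * (S - Sshrunk) * Vᵀ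
    rw [Matrix.mul_sub, Matrix.sub_mul]
  -- nuclear norm of Xstar
  have hnn : nuclearNorm Xstar = ∑ j, Real.sqrt (∑ i, Sshrunk i j * Sshrunk i j) := by
    show (∑ i, singularValues (U * Sshrunk * Vᵀ) i) = _
    simp only [singularValues]
    exact nuclearNorm_conj_aux U Sshrunk V hU hV' hSshdiag Real.sqrt
  -- trace of Wᵀ Xstar
  have hcol : ∀ j : Fin n,
      (∑ i, D i j * Sshrunk i j) = τ * Real.sqrt (∑ i, Sshrunk i j * Sshrunk i j) := by
    intro j
    rw [sum_rectdiag j _ (fun i hi => by rw [hSshdiag i j hi, mul_zero]),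
        sum_rectdiag j _ (fun i hi => by rw [hSshdiag i j hi, mul_zero])]
    split
    · next h =>
      set i0 : Fin m := ⟨(j : ℕ), h⟩ with hi0
      have hii : ((i0 : ℕ) = (j : ℕ)) := rfl
      rw [Real.sqrt_mul_self (hSsh0 i0 j)]
      rcases le_total (S i0 j) τ with hle | hle
      · have h1 : Sshrunk i0 j = 0 := by
          rw [hSsh_apply, if_pos hii]
          exact max_eq_right (by linarith)
        rw [h1, mul_zero, mul_zero]
      · have h1 : Sshrunk i0 j = S i0 j - τ := by
          rw [hSsh_apply, if_pos hii]
          exact max_eq_left (by linarith)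
        have h2 : D i0 j = τ := by rw [hD_apply, h1]; ring
        rw [h2]
    · next h => rw [Real.sqrt_zero, mul_zero]
  have htrXstar : Matrix.trace ((U * D * Vᵀ)ᵀ * Xstar) = τ * nuclearNorm Xstar := by
    have e1 : (U * D * Vᵀ)ᵀ * Xstar = Vᵀᵀ * (Dᵀ * Sshrunk) * Vᵀ := by
      show (U * D * Vᵀ)ᵀ * (U * Sshrunk * Vᵀ) = _
      have ht : (U * D * Vᵀ)ᵀ = V * Dᵀ * Uᵀ := by
        simp [Matrix.transpose_mul, Matrix.mul_assoc]
      rw [ht, Matrix.transpose_transpose]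
      calc V * Dᵀ * Uᵀ * (U * Sshrunk * Vᵀ) = V * (Dᵀ * ((Uᵀ * U) * Sshrunk)) * Vᵀ := by
            simp only [Matrix.mul_assoc]
        _ = V * (Dᵀ * Sshrunk) * Vᵀ := by rw [hU, Matrix.one_mul]
    rw [e1, trace_conj Vᵀ _ (by rw [Matrix.transpose_transpose]; exact hV)]
    have e2 : Matrix.trace (Dᵀ * Sshrunk) = ∑ j, ∑ i, D i j * Sshrunk i j := by
      rw [Matrix.trace]
      simp only [Matrix.diag, Matrix.mul_apply, Matrix.transpose_apply]
    rw [e2, hnn, Finset.mul_sum]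
    exact Finset.sum_congr rfl (fun j _ => hcol j)
  -- frobNorm squared
  have hfrob : ∀ A : Matrix (Fin m) (Fin n) ℝ, (frobNorm A)^2 = ∑ i, ∑ j, (A i j)^2 := by
    intro A
    rw [frobNorm, Real.sq_sqrt (by positivity)]
  -- the master identity
  have hkey : ∀ X : Matrix (Fin m) (Fin n) ℝ,
      f X = f Xstar + (τ * nuclearNorm X - Matrix.trace ((U * D * Vᵀ)ᵀ * X))
        + (1/2) * ∑ i, ∑ j, ((X - Xstar) i j)^2 := by
    intro X
    have hXY : X - Y = (X - Xstar) - (U * D * Vᵀ) := by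
      rw [← hWmat]; abel
    have hXstarY : Xstar - Y = Xstar - Y := rfl
    have hXsq : (frobNorm (X - Y))^2
        = (∑ i, ∑ j, ((X - Xstar) i j)^2)
          - 2 * (∑ i, ∑ j, (X - Xstar) i j * (U * D * Vᵀ) i j)
          + ∑ i, ∑ j, ((U * D * Vᵀ) i j)^2 := by
      rw [hfrob, hXY, sq_sub_expand]
    have hXstarsq : (frobNorm (Xstar - Y))^2 = ∑ i, ∑ j, ((U * D * Vᵀ) i j)^2 := by
      rw [hfrob]
      apply Finset.sum_congr rfl; intro i _; apply Finset.sum_congr rfl; intro j _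
      have : (Xstar - Y) i j = -((Y - Xstar) i j) := by
        rw [Matrix.sub_apply, Matrix.sub_apply]; ring
      rw [this, hWmat, neg_sq]
    have hip : (∑ i, ∑ j, (X - Xstar) i j * (U * D * Vᵀ) i j)
        = Matrix.trace ((U * D * Vᵀ)ᵀ * X) - Matrix.trace ((U * D * Vᵀ)ᵀ * Xstar) := by
      rw [trace_eq_ip, trace_eq_ip]
      rw [← Finset.sum_sub_distrib]
      apply Finset.sum_congr rfl; intro i _
      rw [← Finset.sum_sub_distrib]
      apply Finset.sum_congr rfl; intro j _
      rw [Matrix.sub_apply]; ring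
    show τ * nuclearNorm X + (1 / 2) * (frobNorm (X - Y)) ^ 2 = _
    have hfstar : f Xstar = τ * nuclearNorm Xstar + (1 / 2) * (frobNorm (Xstar - Y)) ^ 2 := rfl
    rw [hXsq, hfstar, hXstarsq, hip, htrXstar]
    ring
  have hsqnonneg : ∀ X : Matrix (Fin m) (Fin n) ℝ,
      (0:ℝ) ≤ ∑ i, ∑ j, ((X - Xstar) i j)^2 := by
    intro X; positivity
  have hmain : ∀ X : Matrix (Fin m) (Fin n) ℝ,
      0 ≤ τ * nuclearNorm X - Matrix.trace ((U * D * Vᵀ)ᵀ * X) := by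
    intro X
    have := key_ineq τ hτ.le U D V hU hV' hDdiag hD0 hDτ X
    linarith
  clear_value f Xstar Sshrunk
  constructor
  · intro X
    have h1 := hkey X
    have h2 := hmain X
    have h3 := hsqnonneg X
    linarith
  · intro X hfeq
    have h1 := hkey X
    have h2 := hmain X
    have h3 := hsqnonneg X
    have hzero : ∑ i, ∑ j, ((X - Xstar) i j)^2 = 0 := by linarith
    have hentry : ∀ i ∈ Finset.univ, (∑ j, ((X - Xstar) i j)^2) = 0 := by
      rw [← Finset.sum_eq_zero_iff_of_nonneg (fun i _ => by positivity)]
      exact hzero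
    ext i j
    have hrow := hentry i (Finset.mem_univ i)
    have hentry2 : ∀ j ∈ Finset.univ, ((X - Xstar) i j)^2 = 0 := by
      rw [← Finset.sum_eq_zero_iff_of_nonneg (fun j _ => by positivity)]
      exact hrow
    have := hentry2 j (Finset.mem_univ j)
    have h4 : (X - Xstar) i j = 0 := by
      exact pow_eq_zero_iff (by norm_num) |>.mp this
    rw [Matrix.sub_apply] at h4
    linarith
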